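/- Let k ≥ 1 and let m ≥ 2 be even. Then the sum over all tuples (b_1,...,b_m) of vectors in F_2^k of (-1)^(b_1·b_2 + b_2·b_3 + ... + b_{m-1}·b_m + b_m·b_1) equals 2^(mk/2 + k). -/

import Mathlib

open Finset

/-- Cyclic shift on `F_2^n`: `(shift x) i = x (i+1)`. -/
def shift (n : ℕ) (x : Fin n → ZMod 2) : Fin n → ZMod 2 := fun i => x (finRotate n i)

/-- Dot product on `F_2^n`. -/
def dot (n : ℕ) (x y : Fin n → ZMod 2) : ZMod 2 := ∑ i, x i * y i

/-- `(-1)^b` as an integer. -/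
def sgn (b : ZMod 2) : ℤ := if b = 0 then 1 else -1

/-!
Write `H x y = (-1)^(x·y)` for the Walsh–Hadamard matrix indexed by `F_2^k`. Orthogonality of the
characters `z ↦ (-1)^(w·z)` gives `H² = 2^k • 1`, and expanding the matrix product shows that the
cyclic sum is `trace (H^m)`. For `m = 2t` this is `trace ((2^k)^t • 1) = 2^(kt) · 2^k`.
-/

open Matrix

lemma Fin.cons_add_one_eq_snoc {n : ℕ} {α : Type*} (x : α) (p : Fin n → α) (i : Fin (n + 1)) :
    (Fin.cons x p : Fin (n + 1) → α) (i + 1) = (Fin.snoc p x : Fin (n + 1) → α) i := by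
  induction i using Fin.lastCases with
  | last => rw [Fin.last_add_one, Fin.cons_zero, Fin.snoc_last]
  | cast j => rw [Fin.coeSucc_eq_succ, Fin.cons_succ, Fin.snoc_castSucc]

lemma Fin.sum_pi_succ {n : ℕ} {α M : Type*} [Fintype α] [AddCommMonoid M]
    (f : (Fin (n + 1) → α) → M) : ∑ b, f b = ∑ x, ∑ p : Fin n → α, f (Fin.cons x p) := by
  rw [← (Fin.consEquiv fun _ => α).sum_comp, Fintype.sum_prod_type]
  rfl

namespace Matrix

variable {ι R : Type*} [Fintype ι] [DecidableEq ι] [CommSemiring R]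

theorem pow_succ_apply_eq_sum_prod (A : Matrix ι ι R) (n : ℕ) (x y : ι) :
    (A ^ (n + 1)) x y =
      ∑ p : Fin n → ι,
        ∏ i, A ((Fin.cons x p : Fin (n + 1) → ι) i) ((Fin.snoc p y : Fin (n + 1) → ι) i) := by
  induction n generalizing x with
  | zero => simp [Fin.snoc]
  | succ n ih =>
    rw [pow_succ', mul_apply, Fin.sum_pi_succ]
    refine sum_congr rfl fun z _ => ?_
    rw [ih, mul_sum]
    refine sum_congr rfl fun p _ => ?_
    rw [Fin.prod_univ_succ (n := n + 1), ← Fin.cons_snoc_eq_snoc_cons]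
    simp only [Fin.cons_zero, Fin.cons_succ]

theorem trace_pow_succ_eq_sum_prod (A : Matrix ι ι R) (n : ℕ) :
    trace (A ^ (n + 1)) = ∑ b : Fin (n + 1) → ι, ∏ i, A (b i) (b (i + 1)) := by
  simp only [trace, diag_apply, pow_succ_apply_eq_sum_prod, Fin.sum_pi_succ,
    Fin.cons_add_one_eq_snoc]

end Matrix

lemma sgn_add : ∀ a b : ZMod 2, sgn (a + b) = sgn a * sgn b := by decide

lemma sgn_eq_one_iff : ∀ a : ZMod 2, sgn a = 1 ↔ a = 0 := by decide

lemma sgn_sum {ι : Type*} (s : Finset ι) (f : ι → ZMod 2) :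
    sgn (∑ i ∈ s, f i) = ∏ i ∈ s, sgn (f i) := by
  classical
  induction s using Finset.induction with
  | empty => rfl
  | insert i s hi ih => rw [sum_insert hi, prod_insert hi, sgn_add, ih]

def dotChar (k : ℕ) (w : Fin k → ZMod 2) : AddChar (Fin k → ZMod 2) ℤ where
  toFun z := sgn (dot k w z)
  map_zero_eq_one' := by simp [dot, sgn]
  map_add_eq_mul' z z' := by
    simp only [dot, Pi.add_apply, mul_add, sum_add_distrib, sgn_add]

lemma dotChar_apply (k : ℕ) (w z : Fin k → ZMod 2) : dotChar k w z = sgn (dot k w z) := rfl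

lemma dotChar_eq_zero_iff {k : ℕ} {w : Fin k → ZMod 2} : dotChar k w = 0 ↔ w = 0 := by
  refine ⟨fun h => funext fun i => ?_, fun h => ?_⟩
  · have := AddChar.eq_zero_iff.1 h (Pi.single i 1)
    simpa [dotChar_apply, dot, Pi.single_apply, sgn_eq_one_iff] using this
  · ext z
    simp [dotChar_apply, dot, h, sgn]

lemma sum_sgn_dot (k : ℕ) (w : Fin k → ZMod 2) :
    ∑ z, sgn (dot k w z) = if w = 0 then 2 ^ k else 0 := by
  classical
  have := AddChar.sum_eq_ite (dotChar k w)
  simpa [dotChar_eq_zero_iff, dotChar_apply] using this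

def walshHadamard (k : ℕ) : Matrix (Fin k → ZMod 2) (Fin k → ZMod 2) ℤ :=
  of fun x y => sgn (dot k x y)

lemma walshHadamard_mul_self (k : ℕ) : walshHadamard k * walshHadamard k = (2 ^ k : ℤ) • 1 := by
  ext x y
  have : ∀ z, sgn (dot k x z) * sgn (dot k z y) = sgn (dot k (x + y) z) := fun z => by
    simp only [dot, ← sgn_add, ← sum_add_distrib, Pi.add_apply, add_mul, mul_comm (z _)]
  simp only [walshHadamard, mul_apply, of_apply, this, sum_sgn_dot, add_eq_zero_iff_eq_neg,
    ZModModule.neg_eq_self, Matrix.smul_apply, one_apply, smul_eq_mul, mul_ite, mul_one, mul_zero]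

lemma trace_walshHadamard_pow_even (k t : ℕ) :
    trace (walshHadamard k ^ (2 * t)) = 2 ^ (k * t + k) := by
  rw [pow_mul, sq, walshHadamard_mul_self, smul_pow, one_pow, trace_smul, trace_one]
  simp [pow_add, pow_mul]

/-- The cyclic character sum over tuples of `m` blocks with `m` even equals
`2^(mk/2 + k)`. -/
theorem cyclic_block_sum_even (k m : ℕ) (hm : 2 ≤ m) (hme : Even m) :
    (∑ b : Fin m → (Fin k → ZMod 2),
        sgn (∑ i : Fin m, dot k (b i) (b (i + ⟨1, by omega⟩)))) =
      2 ^ (m * k / 2 + k) := by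
  obtain ⟨n, rfl⟩ : ∃ n, m = n + 1 := ⟨m - 1, by omega⟩
  have h_one : (⟨1, by omega⟩ : Fin (n + 1)) = 1 := (Fin.one_eq_mk_of_lt (by omega)).symm
  obtain ⟨t, ht⟩ := hme.two_dvd
  calc _ = trace (walshHadamard k ^ (n + 1)) := by
          simp only [h_one, sgn_sum, trace_pow_succ_eq_sum_prod, walshHadamard, of_apply]
    _ = 2 ^ (k * t + k) := by rw [ht, trace_walshHadamard_pow_even]
    _ = 2 ^ ((n + 1) * k / 2 + k) := by
          rw [ht, mul_assoc, Nat.mul_div_cancel_left _ two_pos, mul_comm]
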